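/- Let U, H be Hopf algebras and R : H ⊗ U → U ⊗ H a normal, multiplicative coalgebra map, with actions h ▷ u := ε_H(h^R)u^R and h ◁ u := ε_U(u^R)h^R. Then for all u ∈ U, h ∈ H: S_U(h ▷ u) = (h ◁ u₍₁₎) ▷ S_U(u₍₂₎) and S_H(h ◁ u) = S_H(h₍₁₎) ◁ (h₍₂₎ ▷ u). -/

import Mathlib

open TensorProduct

noncomputable section

variable {k : Type*} [Field k]
variable {U : Type*} [Ring U] [HopfAlgebra k U]
variable {H : Type*} [Ring H] [HopfAlgebra k H]

/-- The tensor product comultiplication on `A ⊗ B`: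
`a ⊗ b ↦ (a₍₁₎ ⊗ b₍₁₎) ⊗ (a₍₂₎ ⊗ b₍₂₎)`. -/
def comulTP (k A B : Type*) [Field k] [Ring A] [HopfAlgebra k A] [Ring B] [HopfAlgebra k B] :
    A ⊗[k] B →ₗ[k] (A ⊗[k] B) ⊗[k] (A ⊗[k] B) :=
  (TensorProduct.tensorTensorTensorComm k A A B B).toLinearMap ∘ₗ
    TensorProduct.map (Coalgebra.comul (R := k)) (Coalgebra.comul (R := k))

/-- The tensor product counit on `A ⊗ B`: `a ⊗ b ↦ ε(a)ε(b)`. -/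
def counitTP (k A B : Type*) [Field k] [Ring A] [HopfAlgebra k A] [Ring B] [HopfAlgebra k B] :
    A ⊗[k] B →ₗ[k] k :=
  (TensorProduct.lid k k).toLinearMap ∘ₗ
    TensorProduct.map (Coalgebra.counit (R := k)) (Coalgebra.counit (R := k))

/-- `R` is left normal: `R(h ⊗ 1_U) = 1_U ⊗ h`. -/
def LeftNormal (R : H ⊗[k] U →ₗ[k] U ⊗[k] H) : Prop :=
  ∀ h : H, R (h ⊗ₜ[k] (1 : U)) = (1 : U) ⊗ₜ[k] h

/-- `R` is right normal: `R(1_H ⊗ u) = u ⊗ 1_H`. -/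
def RightNormal (R : H ⊗[k] U →ₗ[k] U ⊗[k] H) : Prop :=
  ∀ u : U, R ((1 : H) ⊗ₜ[k] u) = u ⊗ₜ[k] (1 : H)

/-- `R` is left multiplicative: `u^R ⊗ (hh')^R = (u^R)^r ⊗ h^r(h')^R`,
as an equality of linear maps `(H ⊗ H) ⊗ U → U ⊗ H`. -/
def LeftMult (R : H ⊗[k] U →ₗ[k] U ⊗[k] H) : Prop :=
  R ∘ₗ TensorProduct.map (LinearMap.mul' k H) (LinearMap.id : U →ₗ[k] U) =
    TensorProduct.map (LinearMap.id : U →ₗ[k] U) (LinearMap.mul' k H) ∘ₗ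
      (TensorProduct.assoc k U H H).toLinearMap ∘ₗ
      TensorProduct.map R (LinearMap.id : H →ₗ[k] H) ∘ₗ
      (TensorProduct.assoc k H U H).symm.toLinearMap ∘ₗ
      TensorProduct.map (LinearMap.id : H →ₗ[k] H) R ∘ₗ
      (TensorProduct.assoc k H H U).toLinearMap

/-- `R` is right multiplicative: `(uu')^R ⊗ h^R = u^R(u')^r ⊗ (h^R)^r`,
as an equality of linear maps `H ⊗ (U ⊗ U) → U ⊗ H`. -/
def RightMult (R : H ⊗[k] U →ₗ[k] U ⊗[k] H) : Prop :=
  R ∘ₗ TensorProduct.map (LinearMap.id : H →ₗ[k] H) (LinearMap.mul' k U) =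
    TensorProduct.map (LinearMap.mul' k U) (LinearMap.id : H →ₗ[k] H) ∘ₗ
      (TensorProduct.assoc k U U H).symm.toLinearMap ∘ₗ
      TensorProduct.map (LinearMap.id : U →ₗ[k] U) R ∘ₗ
      (TensorProduct.assoc k U H U).toLinearMap ∘ₗ
      TensorProduct.map R (LinearMap.id : U →ₗ[k] U) ∘ₗ
      (TensorProduct.assoc k H U U).symm.toLinearMap

/-- `R` is a coalgebra map for the tensor product coalgebra structures. -/
def IsCoalgMap (R : H ⊗[k] U →ₗ[k] U ⊗[k] H) : Prop :=
  counitTP k U H ∘ₗ R = counitTP k H U ∧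
    comulTP k U H ∘ₗ R = TensorProduct.map R R ∘ₗ comulTP k H U

/-- The left action `h ⊗ u ↦ h ▷ u = ε_H(h^R)u^R`, as a linear map `H ⊗ U → U`. -/
def lact (R : H ⊗[k] U →ₗ[k] U ⊗[k] H) : H ⊗[k] U →ₗ[k] U :=
  (TensorProduct.rid k U).toLinearMap ∘ₗ
    TensorProduct.map (LinearMap.id : U →ₗ[k] U) (Coalgebra.counit (R := k)) ∘ₗ R

/-- The right action `h ⊗ u ↦ h ◁ u = ε_U(u^R)h^R`, as a linear map `H ⊗ U → H`. -/
def ract (R : H ⊗[k] U →ₗ[k] U ⊗[k] H) : H ⊗[k] U →ₗ[k] H :=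
  (TensorProduct.lid k H).toLinearMap ∘ₗ
    TensorProduct.map (Coalgebra.counit (R := k)) (LinearMap.id : H →ₗ[k] H) ∘ₗ R

/-! The action `▷ = (id ⊗ ε) ∘ R` is a coalgebra map `H ⊗ U → U`, so in the convolution algebra of
linear maps `H ⊗ U → U` it has `S_U ∘ ▷` as two-sided inverse; it therefore suffices to show that
`h ⊗ u ↦ (h ◁ u₁) ▷ S(u₂)` is a right inverse of `▷`. Since `R` is a coalgebra map,
`R(h ⊗ u) = (h₁ ▷ u₁) ⊗ (h₂ ◁ u₂)`, so right multiplicativity becomes the matched-pair identity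
`h ▷ (uv) = (h₁ ▷ u₁)((h₂ ◁ u₂) ▷ v)`. Together with coassociativity it gives
`(h₁ ▷ u₁)((h₂ ◁ u₂) ▷ S(u₃)) = h ▷ (u₁ S(u₂)) = ε(u) (h ▷ 1) = ε(h) ε(u)`, the last step by
left normality.
The identity for `◁` is the mirror image, with `S_H ∘ ◁` as a left inverse of `◁`. -/

open Coalgebra WithConv LinearMap

section Coassoc

variable {K E M : Type*} [CommSemiring K] [AddCommMonoid E] [Module K E] [Coalgebra K E]
  [AddCommMonoid M] [Module K M]

/-- With `E = C ⊗ D` and `π` the projection to `D`, `lTensor E π ∘ₗ comul` is the right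
`D`-coaction on `C ⊗ D`, and this says that the comultiplication of `C ⊗ D` is `D`-colinear. -/
theorem lTensor_lTensor_comp_comul_comp_comul (π : E →ₗ[K] M) :
    lTensor E (lTensor E π ∘ₗ comul) ∘ₗ comul =
      (TensorProduct.assoc K E E M).toLinearMap ∘ₗ rTensor M comul ∘ₗ lTensor E π ∘ₗ comul := by
  have h : lTensor E (lTensor E π) ∘ₗ (TensorProduct.assoc K E E E).toLinearMap =
      (TensorProduct.assoc K E E M).toLinearMap ∘ₗ lTensor (E ⊗[K] E) π := by
    simp [lTensor_tensor, ← comp_assoc]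
  rw [lTensor_comp, comp_assoc, ← coassoc, ← comp_assoc, h, comp_assoc, ← comp_assoc comul,
    lTensor_comp_rTensor, ← rTensor_comp_lTensor, comp_assoc]

theorem rTensor_rTensor_comp_comul_comp_comul (π : E →ₗ[K] M) :
    rTensor E (rTensor E π ∘ₗ comul) ∘ₗ comul =
      (TensorProduct.assoc K M E E).symm.toLinearMap ∘ₗ lTensor M comul ∘ₗ
        rTensor E π ∘ₗ comul := by
  have h : rTensor E (rTensor E π) ∘ₗ (TensorProduct.assoc K E E E).symm.toLinearMap =
      (TensorProduct.assoc K M E E).symm.toLinearMap ∘ₗ rTensor (E ⊗[K] E) π := by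
    simp [rTensor_tensor, ← comp_assoc]
  rw [rTensor_comp, comp_assoc, ← coassoc_symm, ← comp_assoc, h, comp_assoc, ← comp_assoc comul,
    rTensor_comp_lTensor, ← lTensor_comp_rTensor, comp_assoc]

end Coassoc

section Convolution

variable {K C A : Type*} [CommSemiring K] [AddCommMonoid C] [Module K C] [Coalgebra K C]
  [Semiring A] [HopfAlgebra K A]

theorem antipode_comp_convMul_self (f : C →ₗc[K] A) :
    toConv (HopfAlgebra.antipode K ∘ₗ (f : C →ₗ[K] A)) * toConv (f : C →ₗ[K] A) = 1 := by
  have := convMul_comp_coalgHom_distrib (toConv (HopfAlgebra.antipode K)) (toConv LinearMap.id) f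
  rw [antipode_mul_id] at this
  ext x
  simpa using congr($this x).symm

theorem convMul_antipode_comp_self (f : C →ₗc[K] A) :
    toConv (f : C →ₗ[K] A) * toConv (HopfAlgebra.antipode K ∘ₗ (f : C →ₗ[K] A)) = 1 := by
  have := convMul_comp_coalgHom_distrib (toConv LinearMap.id) (toConv (HopfAlgebra.antipode K)) f
  rw [id_mul_antipode] at this
  ext x
  simpa using congr($this x).symm

end Convolution

namespace Coalgebra.TensorProduct

section Projections

variable {K A B : Type*} [CommSemiring K] [AddCommMonoid A] [Module K A] [Coalgebra K A]
  [AddCommMonoid B] [Module K B] [Coalgebra K B]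

variable (K A B) in
noncomputable def fstCoalgHom : A ⊗[K] B →ₗc[K] A :=
  (Coalgebra.TensorProduct.rid K K A).toCoalgHom.comp
    (map (CoalgHom.id K A) (counitCoalgHom K B))

variable (K A B) in
noncomputable def sndCoalgHom : A ⊗[K] B →ₗc[K] B :=
  (Coalgebra.TensorProduct.lid K B).toCoalgHom.comp
    (map (counitCoalgHom K A) (CoalgHom.id K B))

@[simp] theorem fstCoalgHom_tmul (a : A) (b : B) :
    fstCoalgHom K A B (a ⊗ₜ b) = counit (R := K) b • a := rfl

@[simp] theorem sndCoalgHom_tmul (a : A) (b : B) :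
    sndCoalgHom K A B (a ⊗ₜ b) = counit (R := K) a • b := rfl

theorem map_fstCoalgHom_sndCoalgHom_comp_comul :
    _root_.TensorProduct.map (fstCoalgHom K A B : A ⊗[K] B →ₗ[K] A) (sndCoalgHom K A B) ∘ₗ
      comul = LinearMap.id := by
  have h : _root_.TensorProduct.map (fstCoalgHom K A B : A ⊗[K] B →ₗ[K] A) (sndCoalgHom K A B) ∘ₗ
      (tensorTensorTensorComm K A A B B).toLinearMap =
      _root_.TensorProduct.map ((_root_.TensorProduct.rid K A).toLinearMap ∘ₗ lTensor A counit)
        ((_root_.TensorProduct.lid K B).toLinearMap ∘ₗ rTensor B counit) := by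
    ext; simp [smul_tmul', smul_smul, mul_comm]
  ext a b
  simpa [AlgebraTensorModule.tensorTensorTensorComm_eq] using congr($h (comul a ⊗ₜ comul b))

theorem lTensor_sndCoalgHom_comp_comul :
    lTensor (A ⊗[K] B) (sndCoalgHom K A B : A ⊗[K] B →ₗ[K] B) ∘ₗ comul =
      (_root_.TensorProduct.assoc K A B B).symm.toLinearMap ∘ₗ lTensor A comul := by
  have h : lTensor (A ⊗[K] B) (sndCoalgHom K A B : A ⊗[K] B →ₗ[K] B) ∘ₗ
      (tensorTensorTensorComm K A A B B).toLinearMap =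
      (_root_.TensorProduct.assoc K A B B).symm.toLinearMap ∘ₗ
        rTensor _ ((_root_.TensorProduct.rid K A).toLinearMap ∘ₗ lTensor A counit) := by
    ext; simp [smul_tmul']
  ext a b
  simpa [AlgebraTensorModule.tensorTensorTensorComm_eq] using congr($h (comul a ⊗ₜ comul b))

theorem rTensor_fstCoalgHom_comp_comul :
    rTensor (A ⊗[K] B) (fstCoalgHom K A B : A ⊗[K] B →ₗ[K] A) ∘ₗ comul =
      (_root_.TensorProduct.assoc K A A B).toLinearMap ∘ₗ rTensor B comul := by
  have h : rTensor (A ⊗[K] B) (fstCoalgHom K A B : A ⊗[K] B →ₗ[K] A) ∘ₗ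
      (tensorTensorTensorComm K A A B B).toLinearMap =
      (_root_.TensorProduct.assoc K A A B).toLinearMap ∘ₗ
        lTensor _ ((_root_.TensorProduct.lid K B).toLinearMap ∘ₗ rTensor B counit) := by
    ext; simp [smul_tmul']
  ext a b
  simpa [AlgebraTensorModule.tensorTensorTensorComm_eq] using congr($h (comul a ⊗ₜ comul b))

end Projections

section Linearity

variable {K A B : Type*} [CommSemiring K] [AddCommMonoid A] [Module K A] [Coalgebra K A]
  [Semiring B] [Algebra K B] [Coalgebra K B]

theorem fstCoalgHom_comp_rTensor_mul'_comp_assoc_symm :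
    (fstCoalgHom K B A : B ⊗[K] A →ₗ[K] B) ∘ₗ rTensor A (mul' K B) ∘ₗ
        (_root_.TensorProduct.assoc K B B A).symm.toLinearMap =
      mul' K B ∘ₗ lTensor B (fstCoalgHom K B A) := by
  ext; simp

theorem sndCoalgHom_comp_lTensor_mul'_comp_assoc :
    (sndCoalgHom K A B : A ⊗[K] B →ₗ[K] B) ∘ₗ lTensor A (mul' K B) ∘ₗ
        (_root_.TensorProduct.assoc K A B B).toLinearMap =
      mul' K B ∘ₗ rTensor B (sndCoalgHom K A B) := by
  ext; simp

end Linearity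

end Coalgebra.TensorProduct

open Coalgebra.TensorProduct (fstCoalgHom sndCoalgHom map_fstCoalgHom_sndCoalgHom_comp_comul
  lTensor_sndCoalgHom_comp_comul rTensor_fstCoalgHom_comp_comul
  fstCoalgHom_comp_rTensor_mul'_comp_assoc_symm sndCoalgHom_comp_lTensor_mul'_comp_assoc)

theorem comulTP_eq_comul (k A B : Type*) [Field k] [Ring A] [HopfAlgebra k A] [Ring B]
    [HopfAlgebra k B] : comulTP k A B = comul := rfl

theorem counitTP_eq_counit (k A B : Type*) [Field k] [Ring A] [HopfAlgebra k A] [Ring B]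
    [HopfAlgebra k B] : counitTP k A B = counit := by
  ext; simp [counitTP, mul_comm]

section MatchedPair

variable {R : H ⊗[k] U →ₗ[k] U ⊗[k] H}

def IsCoalgMap.toCoalgHom (hcm : IsCoalgMap R) : H ⊗[k] U →ₗc[k] U ⊗[k] H where
  toLinearMap := R
  counit_comp := by simpa [counitTP_eq_counit] using hcm.1
  map_comp_comul := hcm.2.symm

theorem lact_eq_fstCoalgHom_comp (R : H ⊗[k] U →ₗ[k] U ⊗[k] H) :
    lact R = (fstCoalgHom k U H : U ⊗[k] H →ₗ[k] U) ∘ₗ R := rfl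

theorem ract_eq_sndCoalgHom_comp (R : H ⊗[k] U →ₗ[k] U ⊗[k] H) :
    ract R = (sndCoalgHom k U H : U ⊗[k] H →ₗ[k] H) ∘ₗ R := rfl

theorem IsCoalgMap.antipode_comp_lact_convMul_lact (hcm : IsCoalgMap R) :
    toConv (HopfAlgebra.antipode k ∘ₗ lact R) * toConv (lact R) = 1 :=
  antipode_comp_convMul_self ((fstCoalgHom k U H).comp hcm.toCoalgHom)

theorem IsCoalgMap.ract_convMul_antipode_comp_ract (hcm : IsCoalgMap R) :
    toConv (ract R) * toConv (HopfAlgebra.antipode k ∘ₗ ract R) = 1 :=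
  convMul_antipode_comp_self ((sndCoalgHom k U H).comp hcm.toCoalgHom)

theorem IsCoalgMap.map_lact_ract_comp_comul (hcm : IsCoalgMap R) :
    map (lact R) (ract R) ∘ₗ comul = R := by
  rw [lact_eq_fstCoalgHom_comp, ract_eq_sndCoalgHom_comp, map_comp, comp_assoc,
    ← comulTP_eq_comul, ← hcm.2, comulTP_eq_comul, ← comp_assoc,
    map_fstCoalgHom_sndCoalgHom_comp_comul, id_comp]

/-- `h ▷ (uv) = (h₁ ▷ u₁)((h₂ ◁ u₂) ▷ v)` -/
theorem RightMult.lact_comp_lTensor_mul' (hrm : RightMult R) (hcm : IsCoalgMap R) :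
    lact R ∘ₗ lTensor H (mul' k U) ∘ₗ (TensorProduct.assoc k H U U).toLinearMap =
      mul' k U ∘ₗ map (lact R) (lact R ∘ₗ rTensor U (ract R)) ∘ₗ
        (TensorProduct.assoc k (H ⊗[k] U) (H ⊗[k] U) U).toLinearMap ∘ₗ rTensor U comul := by
  calc _ = ((fstCoalgHom k U H : U ⊗[k] H →ₗ[k] U) ∘ₗ rTensor H (mul' k U) ∘ₗ
          (TensorProduct.assoc k U U H).symm.toLinearMap) ∘ₗ lTensor U R ∘ₗ
          (TensorProduct.assoc k U H U).toLinearMap ∘ₗ rTensor U R := by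
        rw [lact_eq_fstCoalgHom_comp, lTensor_def, comp_assoc,
          ← comp_assoc (TensorProduct.assoc k H U U).toLinearMap, hrm]
        simp only [comp_assoc, LinearEquiv.symm_comp, comp_id]
        rfl
    _ = (mul' k U ∘ₗ lTensor U (fstCoalgHom k U H)) ∘ₗ lTensor U R ∘ₗ
          (TensorProduct.assoc k U H U).toLinearMap ∘ₗ rTensor U R := by
        rw [fstCoalgHom_comp_rTensor_mul'_comp_assoc_symm]
    _ = mul' k U ∘ₗ lTensor U (lact R) ∘ₗ (TensorProduct.assoc k U H U).toLinearMap ∘ₗ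
          rTensor U (map (lact R) (ract R)) ∘ₗ rTensor U comul := by
        rw [← rTensor_comp, hcm.map_lact_ract_comp_comul, lact_eq_fstCoalgHom_comp, lTensor_comp]
        simp only [comp_assoc]
    _ = _ := by
        congr 1
        simp only [← comp_assoc]
        congr 1
        ext; simp

/-- `(gh) ◁ u = (g ◁ (h₁ ▷ u₁))(h₂ ◁ u₂)` -/
theorem LeftMult.ract_comp_rTensor_mul' (hlm : LeftMult R) (hcm : IsCoalgMap R) :
    ract R ∘ₗ rTensor U (mul' k H) ∘ₗ (TensorProduct.assoc k H H U).symm.toLinearMap =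
      mul' k H ∘ₗ map (ract R ∘ₗ lTensor H (lact R)) (ract R) ∘ₗ
        (TensorProduct.assoc k H (H ⊗[k] U) (H ⊗[k] U)).symm.toLinearMap ∘ₗ lTensor H comul := by
  calc _ = ((sndCoalgHom k U H : U ⊗[k] H →ₗ[k] H) ∘ₗ lTensor U (mul' k H) ∘ₗ
          (TensorProduct.assoc k U H H).toLinearMap) ∘ₗ rTensor H R ∘ₗ
          (TensorProduct.assoc k H U H).symm.toLinearMap ∘ₗ lTensor H R := by
        rw [ract_eq_sndCoalgHom_comp, rTensor_def, comp_assoc,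
          ← comp_assoc (TensorProduct.assoc k H H U).symm.toLinearMap, hlm]
        simp only [comp_assoc, LinearEquiv.comp_symm, comp_id]
        rfl
    _ = (mul' k H ∘ₗ rTensor H (sndCoalgHom k U H)) ∘ₗ rTensor H R ∘ₗ
          (TensorProduct.assoc k H U H).symm.toLinearMap ∘ₗ lTensor H R := by
        rw [sndCoalgHom_comp_lTensor_mul'_comp_assoc]
    _ = mul' k H ∘ₗ rTensor H (ract R) ∘ₗ (TensorProduct.assoc k H U H).symm.toLinearMap ∘ₗ
          lTensor H (map (lact R) (ract R)) ∘ₗ lTensor H comul := by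
        rw [← lTensor_comp, hcm.map_lact_ract_comp_comul, ract_eq_sndCoalgHom_comp, rTensor_comp]
        simp only [comp_assoc]
    _ = _ := by
        congr 1
        simp only [← comp_assoc]
        congr 1
        ext; simp

theorem LeftNormal.lact_tmul_one (hln : LeftNormal R) (h : H) :
    lact R (h ⊗ₜ 1) = algebraMap k U (counit h) := by
  simp [lact_eq_fstCoalgHom_comp, hln h, Algebra.algebraMap_eq_smul_one]

theorem RightNormal.ract_one_tmul (hrn : RightNormal R) (u : U) :
    ract R (1 ⊗ₜ u) = algebraMap k H (counit u) := by
  simp [ract_eq_sndCoalgHom_comp, hrn u, Algebra.algebraMap_eq_smul_one]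

theorem lact_convMul_eq_one (hln : LeftNormal R) (hrm : RightMult R) (hcm : IsCoalgMap R) :
    toConv (lact R) * toConv (lact R ∘ₗ map (ract R) (HopfAlgebra.antipode k) ∘ₗ
      (TensorProduct.assoc k H U U).symm.toLinearMap ∘ₗ map LinearMap.id comul) = 1 := by
  have hρ : (TensorProduct.assoc k H U U).symm.toLinearMap ∘ₗ map LinearMap.id comul =
      lTensor _ (sndCoalgHom k H U : H ⊗[k] U →ₗ[k] U) ∘ₗ comul :=
    lTensor_sndCoalgHom_comp_comul.symm
  have hsplit : lact R ∘ₗ map (ract R) (HopfAlgebra.antipode k) ∘ₗ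
      (TensorProduct.assoc k H U U).symm.toLinearMap ∘ₗ map LinearMap.id comul =
      (lact R ∘ₗ rTensor U (ract R)) ∘ₗ
        lTensor _ (HopfAlgebra.antipode k ∘ₗ sndCoalgHom k H U) ∘ₗ comul := by
    rw [hρ, lTensor_comp, ← rTensor_comp_lTensor]; simp only [comp_assoc]
  have hS : mul' k U ∘ₗ lTensor U (HopfAlgebra.antipode k) ∘ₗ comul =
      Algebra.linearMap k U ∘ₗ counit := congr(ofConv $(id_mul_antipode (R := k) (C := U)))
  apply WithConv.ext
  rw [LinearMap.convMul_def, LinearMap.convOne_def]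
  calc _ = mul' k U ∘ₗ map (lact R) (lact R ∘ₗ rTensor U (ract R)) ∘ₗ
          lTensor _ (lTensor _ (HopfAlgebra.antipode k ∘ₗ sndCoalgHom k H U) ∘ₗ comul) ∘ₗ
          comul := by
        rw [hsplit, ← map_comp_lTensor, comp_assoc]
    _ = (mul' k U ∘ₗ map (lact R) (lact R ∘ₗ rTensor U (ract R)) ∘ₗ
          (TensorProduct.assoc k (H ⊗[k] U) (H ⊗[k] U) U).toLinearMap ∘ₗ rTensor U comul) ∘ₗ
          lTensor _ (HopfAlgebra.antipode k ∘ₗ sndCoalgHom k H U) ∘ₗ comul := by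
        rw [lTensor_lTensor_comp_comul_comp_comul]; simp only [comp_assoc]
    _ = lact R ∘ₗ lTensor H (mul' k U ∘ₗ lTensor U (HopfAlgebra.antipode k) ∘ₗ comul) := by
        rw [← hrm.lact_comp_lTensor_mul' hcm, lTensor_comp]
        simp only [comp_assoc]
        rw [← hρ, lTensor_tensor]
        simp only [comp_assoc, LinearEquiv.comp_symm_assoc, lTensor_comp]
        rfl
    _ = Algebra.linearMap k U ∘ₗ counit := by
        rw [hS]
        ext h u
        simp [Algebra.algebraMap_eq_smul_one, hln.lact_tmul_one, smul_smul]

theorem convMul_ract_eq_one (hrn : RightNormal R) (hlm : LeftMult R) (hcm : IsCoalgMap R) :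
    toConv (ract R ∘ₗ map (HopfAlgebra.antipode k) (lact R) ∘ₗ
      (TensorProduct.assoc k H H U).toLinearMap ∘ₗ map comul LinearMap.id) * toConv (ract R) =
        1 := by
  have hℓ : (TensorProduct.assoc k H H U).toLinearMap ∘ₗ map comul LinearMap.id =
      rTensor _ (fstCoalgHom k H U : H ⊗[k] U →ₗ[k] H) ∘ₗ comul :=
    rTensor_fstCoalgHom_comp_comul.symm
  have hsplit : ract R ∘ₗ map (HopfAlgebra.antipode k) (lact R) ∘ₗ
      (TensorProduct.assoc k H H U).toLinearMap ∘ₗ map comul LinearMap.id =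
      (ract R ∘ₗ lTensor H (lact R)) ∘ₗ
        rTensor _ (HopfAlgebra.antipode k ∘ₗ fstCoalgHom k H U) ∘ₗ comul := by
    rw [hℓ, rTensor_comp, ← lTensor_comp_rTensor]; simp only [comp_assoc]
  have hS : mul' k H ∘ₗ rTensor H (HopfAlgebra.antipode k) ∘ₗ comul =
      Algebra.linearMap k H ∘ₗ counit := congr(ofConv $(antipode_mul_id (R := k) (C := H)))
  apply WithConv.ext
  rw [LinearMap.convMul_def, LinearMap.convOne_def]
  calc _ = mul' k H ∘ₗ map (ract R ∘ₗ lTensor H (lact R)) (ract R) ∘ₗ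
          rTensor _ (rTensor _ (HopfAlgebra.antipode k ∘ₗ fstCoalgHom k H U) ∘ₗ comul) ∘ₗ
          comul := by
        rw [hsplit, ← map_comp_rTensor, comp_assoc]
    _ = (mul' k H ∘ₗ map (ract R ∘ₗ lTensor H (lact R)) (ract R) ∘ₗ
          (TensorProduct.assoc k H (H ⊗[k] U) (H ⊗[k] U)).symm.toLinearMap ∘ₗ lTensor H comul) ∘ₗ
          rTensor _ (HopfAlgebra.antipode k ∘ₗ fstCoalgHom k H U) ∘ₗ comul := by
        rw [rTensor_rTensor_comp_comul_comp_comul]; simp only [comp_assoc]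
    _ = ract R ∘ₗ rTensor U (mul' k H ∘ₗ rTensor H (HopfAlgebra.antipode k) ∘ₗ comul) := by
        rw [← hlm.ract_comp_rTensor_mul' hcm, rTensor_comp]
        simp only [comp_assoc]
        rw [← hℓ, rTensor_tensor]
        simp only [comp_assoc, LinearEquiv.symm_comp_assoc, rTensor_comp]
        rfl
    _ = Algebra.linearMap k H ∘ₗ counit := by
        rw [hS]
        ext h u
        simp [Algebra.algebraMap_eq_smul_one, ← smul_tmul', hrn.ract_one_tmul, smul_smul, mul_comm]

end MatchedPair

/-- STATEMENT 12: for a normal, multiplicative coalgebra map `R : H ⊗ U → U ⊗ H`,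
`S_U(h ▷ u) = (h ◁ u₍₁₎) ▷ S_U(u₍₂₎)` and `S_H(h ◁ u) = S_H(h₍₁₎) ◁ (h₍₂₎ ▷ u)`,
as equalities of linear maps `H ⊗ U → U` resp. `H ⊗ U → H`. -/
theorem antipode_actions (R : H ⊗[k] U →ₗ[k] U ⊗[k] H)
    (hln : LeftNormal R) (hrn : RightNormal R)
    (hlm : LeftMult R) (hrm : RightMult R) (hcm : IsCoalgMap R) :
    (HopfAlgebra.antipode (R := k) (A := U) ∘ₗ lact R =
      lact R ∘ₗ
        TensorProduct.map (ract R) (HopfAlgebra.antipode (R := k) (A := U)) ∘ₗ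
        (TensorProduct.assoc k H U U).symm.toLinearMap ∘ₗ
        TensorProduct.map (LinearMap.id : H →ₗ[k] H) (Coalgebra.comul (R := k))) ∧
    (HopfAlgebra.antipode (R := k) (A := H) ∘ₗ ract R =
      ract R ∘ₗ
        TensorProduct.map (HopfAlgebra.antipode (R := k) (A := H)) (lact R) ∘ₗ
        (TensorProduct.assoc k H H U).toLinearMap ∘ₗ
        TensorProduct.map (Coalgebra.comul (R := k)) (LinearMap.id : U →ₗ[k] U)) :=
  ⟨congr(ofConv $(left_inv_eq_right_inv hcm.antipode_comp_lact_convMul_lact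
      (lact_convMul_eq_one hln hrm hcm))),
    congr(ofConv $(left_inv_eq_right_inv (convMul_ract_eq_one hrn hlm hcm)
      hcm.ract_convMul_antipode_comp_ract)).symm⟩
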